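/- arXiv:2408.00345 — 2 statements merged into one kernel-verified Lean document; each statement's English description precedes it below -/
import Mathlib

section
/- Let c_0 ∈ X_{0,1}^+, assume the rate coefficients satisfy the growth condition (GB), and let c = (c_i)_{i≥0} be an admissible mild solution of the non-isolated DGED system with initial datum c_0. Then the total mass is conserved: for all t ≥ 0, ∑_{i=0}^∞ i c_i(t) = ∑_{i=0}^∞ i c_{0i}. -/
open Finset MeasureTheory

/-- Infinite-system operator `Q_{1,i}`. -/
noncomputable def Qi1 (a : ℕ → ℕ → ℕ → ℝ) (c : ℕ → ℝ) (i : ℕ) : ℝ :=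
  ∑' p : ℕ × ℕ, if 1 ≤ p.1 then a (i + p.1) p.2 p.1 * c (i + p.1) * c p.2 else 0

/-- Infinite-system operator `Q_{2,i}`. -/
noncomputable def Qi2 (a : ℕ → ℕ → ℕ → ℝ) (c : ℕ → ℝ) (i : ℕ) : ℝ :=
  -∑' p : ℕ × ℕ, if 1 ≤ p.1 ∧ p.1 ≤ p.2 then a p.2 i p.1 * c p.2 * c i else 0

/-- Infinite-system operator `Q_{3,i}` (equal to `0` when `i = 0`). -/
noncomputable def Qi3 (a : ℕ → ℕ → ℕ → ℝ) (c : ℕ → ℝ) (i : ℕ) : ℝ :=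
  ∑ k ∈ Finset.Icc 1 i, ∑' j : ℕ, if k ≤ j then a j (i - k) k * c j * c (i - k) else 0

/-- Infinite-system operator `Q_{4,i}` (equal to `0` when `i = 0`). -/
noncomputable def Qi4 (a : ℕ → ℕ → ℕ → ℝ) (c : ℕ → ℝ) (i : ℕ) : ℝ :=
  -∑ k ∈ Finset.Icc 1 i, ∑' j : ℕ, a i j k * c j * c i

/-- Summability of all the series defining the operators `Q_{j,i}`. -/
def QSummable (a : ℕ → ℕ → ℕ → ℝ) (c : ℕ → ℝ) (i : ℕ) : Prop :=
  Summable (fun p : ℕ × ℕ =>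
    if 1 ≤ p.1 then a (i + p.1) p.2 p.1 * c (i + p.1) * c p.2 else 0) ∧
  Summable (fun p : ℕ × ℕ =>
    if 1 ≤ p.1 ∧ p.1 ≤ p.2 then a p.2 i p.1 * c p.2 * c i else 0) ∧
  (∀ k ∈ Finset.Icc 1 i,
    Summable (fun j : ℕ => if k ≤ j then a j (i - k) k * c j * c (i - k) else 0)) ∧
  (∀ k ∈ Finset.Icc 1 i, Summable (fun j : ℕ => a i j k * c j * c i))

/-- `c` is a mild solution of the isolated DGED system on the set `S` with
initial datum `c0 ∈ X_{0,1}^+`. -/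
def MildSolIso (a : ℕ → ℕ → ℕ → ℝ) (c0 : ℕ → ℝ) (S : Set ℝ) (c : ℕ → ℝ → ℝ) : Prop :=
  (∀ i, c i 0 = c0 i) ∧
  (∀ t ∈ S, (∀ i, 0 ≤ c i t) ∧ Summable (fun i : ℕ => (1 + (i : ℝ)) * c i t)) ∧
  (∀ i, ContinuousOn (c i) S) ∧
  (∀ i : ℕ, ∀ t ∈ S,
    (∀ᵐ s ∂(volume.restrict (Set.Ioc 0 t)), QSummable a (fun n => c n s) i) ∧
    IntegrableOn (fun s => Qi1 a (fun n => c n s) i) (Set.Ioc 0 t) ∧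
    IntegrableOn (fun s => Qi2 a (fun n => c n s) i) (Set.Ioc 0 t) ∧
    IntegrableOn (fun s => Qi3 a (fun n => c n s) i) (Set.Ioc 0 t) ∧
    IntegrableOn (fun s => Qi4 a (fun n => c n s) i) (Set.Ioc 0 t) ∧
    c i t = c0 i + ∫ s in (0 : ℝ)..t,
      (Qi1 a (fun n => c n s) i + Qi2 a (fun n => c n s) i +
        Qi3 a (fun n => c n s) i + Qi4 a (fun n => c n s) i))

/-- `c` is a mild solution of the non-isolated DGED system on the set `S` with
initial datum `c0 ∈ X_{0,1}^+`: the concentration of `0`-clusters is constant and the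
components `c_i`, `i ≥ 1`, satisfy the integral equations. -/
def MildSolNon (a : ℕ → ℕ → ℕ → ℝ) (c0 : ℕ → ℝ) (S : Set ℝ) (c : ℕ → ℝ → ℝ) : Prop :=
  (∀ i, c i 0 = c0 i) ∧
  (∀ t ∈ S, (∀ i, 0 ≤ c i t) ∧ Summable (fun i : ℕ => (1 + (i : ℝ)) * c i t)) ∧
  (∀ i, ContinuousOn (c i) S) ∧
  (∀ t ∈ S, c 0 t = c0 0) ∧
  (∀ i : ℕ, 1 ≤ i → ∀ t ∈ S,
    (∀ᵐ s ∂(volume.restrict (Set.Ioc 0 t)), QSummable a (fun n => c n s) i) ∧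
    IntegrableOn (fun s => Qi1 a (fun n => c n s) i) (Set.Ioc 0 t) ∧
    IntegrableOn (fun s => Qi2 a (fun n => c n s) i) (Set.Ioc 0 t) ∧
    IntegrableOn (fun s => Qi3 a (fun n => c n s) i) (Set.Ioc 0 t) ∧
    IntegrableOn (fun s => Qi4 a (fun n => c n s) i) (Set.Ioc 0 t) ∧
    c i t = c0 i + ∫ s in (0 : ℝ)..t,
      (Qi1 a (fun n => c n s) i + Qi2 a (fun n => c n s) i +
        Qi3 a (fun n => c n s) i + Qi4 a (fun n => c n s) i))

/-- Growth condition (GB) on the rate coefficients. -/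
def GB (a : ℕ → ℕ → ℕ → ℝ) (C Q : ℝ) (q : ℕ → ℕ → ℝ) : Prop :=
  1 ≤ C ∧ 1 ≤ Q ∧ (∀ i k, 0 ≤ q i k) ∧
  (∀ i : ℕ, 1 ≤ i →
    ∑ k ∈ Finset.Icc 1 i, (k : ℝ) * ((i : ℝ) - k + 1) * q i k ≤ Q * i) ∧
  (∀ i j k : ℕ, 1 ≤ k → k ≤ i → 1 ≤ j →
    a i j k ≤ C * ((i : ℝ) - k + 1) * ((j : ℝ) + k) * q i k)

/-- Truncated operator `Q^N_{1,i}`. -/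
noncomputable def QN1 (a : ℕ → ℕ → ℕ → ℝ) (N : ℕ) (c : ℕ → ℝ) (i : ℕ) : ℝ :=
  ∑ k ∈ Finset.Icc 1 (N - i), ∑ j ∈ Finset.Icc 0 (N - k), a (i + k) j k * c (i + k) * c j

/-- Truncated operator `Q^N_{2,i}`. -/
noncomputable def QN2 (a : ℕ → ℕ → ℕ → ℝ) (N : ℕ) (c : ℕ → ℝ) (i : ℕ) : ℝ :=
  -∑ k ∈ Finset.Icc 1 (N - i), ∑ j ∈ Finset.Icc k N, a j i k * c j * c i

/-- Truncated operator `Q^N_{3,i}`. -/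
noncomputable def QN3 (a : ℕ → ℕ → ℕ → ℝ) (N : ℕ) (c : ℕ → ℝ) (i : ℕ) : ℝ :=
  ∑ k ∈ Finset.Icc 1 i, ∑ j ∈ Finset.Icc k N, a j (i - k) k * c j * c (i - k)

/-- Truncated operator `Q^N_{4,i}`. -/
noncomputable def QN4 (a : ℕ → ℕ → ℕ → ℝ) (N : ℕ) (c : ℕ → ℝ) (i : ℕ) : ℝ :=
  -∑ k ∈ Finset.Icc 1 i, ∑ j ∈ Finset.Icc 0 (N - k), a i j k * c j * c i


/-- `c` is a solution of the `N`-truncated non-isolated DGED system on the set `I`. -/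
def IsTruncSolNon (a : ℕ → ℕ → ℕ → ℝ) (N : ℕ) (I : Set ℝ) (c : ℕ → ℝ → ℝ) : Prop :=
  ∀ t ∈ I,
    HasDerivAt (c 0) 0 t ∧
    (∀ i, 1 ≤ i → i ≤ N - 1 →
      HasDerivAt (c i)
        (QN1 a N (fun n => c n t) i + QN2 a N (fun n => c n t) i +
          QN3 a N (fun n => c n t) i + QN4 a N (fun n => c n t) i) t) ∧
    HasDerivAt (c N) (QN3 a N (fun n => c n t) N + QN4 a N (fun n => c n t) N) t

/-- Admissibility: `c` is a pointwise limit of nonnegative solutions of truncated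
non-isolated systems with the same initial data (extended by zero above the truncation). -/
def AdmissibleNon (a : ℕ → ℕ → ℕ → ℝ) (c0 : ℕ → ℝ) (c : ℕ → ℝ → ℝ) : Prop :=
  ∃ (Nm : ℕ → ℕ) (cN : ℕ → ℕ → ℝ → ℝ), StrictMono Nm ∧
    (∀ m, 2 ≤ Nm m) ∧
    (∀ m, IsTruncSolNon a (Nm m) (Set.Ici 0) (cN m)) ∧
    (∀ m, ∀ i, i ≤ Nm m → cN m i 0 = c0 i) ∧
    (∀ m, ∀ i, Nm m < i → ∀ t : ℝ, cN m i t = 0) ∧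
    (∀ m, ∀ i, i ≤ Nm m → ∀ t : ℝ, 0 ≤ t → 0 ≤ cN m i t) ∧
    (∀ i : ℕ, ∀ t : ℝ, 0 ≤ t →
      Filter.Tendsto (fun m => cN m i t) Filter.atTop (nhds (c i t)))

/-!
Each truncated system conserves mass exactly: a transfer of a `k`-cluster from a `p`-cluster to
a `j`-cluster changes `∑ i cᵢ` by `(p - k) - p + (j + k) - j = 0`. Passing to the limit needs the
first moments of the truncated solutions to be uniformly tight. This comes from a superlinear
weight `w` of de la Vallée-Poussin type with `∑ w(i) c₀ᵢ < ∞` which is convex with moderate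
growth: under (GB) the collision terms in the evolution of `∑ w(i) cᵢ` are bounded by
`16 C Q (∑ i cᵢ) (∑ w(i) cᵢ)`, so Grönwall's inequality bounds this moment uniformly in the
truncation.
-/

open Filter Topology

structure IsModerateWeight (w : ℕ → ℕ) : Prop where
  zero : w 0 = 0
  slope_mono {k p : ℕ} : k ≤ p → p * w k ≤ k * w p
  increment_le {x y : ℕ} : x ≤ y → y * w (x + y) ≤ y * w y + 4 * x * w y

/-- Change of `∑ w(i) cᵢ` when a `k`-cluster leaves a `p`-cluster and joins a `j`-cluster. -/
def weightDefect (w : ℕ → ℝ) (p j k : ℕ) : ℝ := w (p - k) - w p + w (j + k) - w j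

namespace IsModerateWeight

variable {w : ℕ → ℕ}

theorem add_le (hw : IsModerateWeight w) (a b : ℕ) : w a + w b ≤ w (a + b) := by
  rcases Nat.eq_zero_or_pos (a + b) with hab | hab
  · obtain ⟨rfl, rfl⟩ : a = 0 ∧ b = 0 := by omega
    simp [hw.zero]
  · have ha := hw.slope_mono (a.le_add_right b)
    have hb := hw.slope_mono (b.le_add_left a)
    exact Nat.le_of_mul_le_mul_left (by nlinarith) hab

theorem sub_add_le (hw : IsModerateWeight w) {p k : ℕ} (hkp : k ≤ p) :
    (w (p - k) : ℝ) + w k ≤ w p := by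
  have := hw.add_le (p - k) k
  rw [Nat.sub_add_cancel hkp] at this
  exact_mod_cast this

theorem defect_zero_nonpos (hw : IsModerateWeight w) {p k : ℕ} (hkp : k ≤ p) :
    weightDefect (fun n => (w n : ℝ)) p 0 k ≤ 0 := by
  simp only [weightDefect, zero_add, hw.zero, CharP.cast_eq_zero, sub_zero]
  linarith [hw.sub_add_le hkp]

theorem mul_defect_le (hw : IsModerateWeight w) {p j k : ℕ} (hk : 1 ≤ k) (hkp : k ≤ p) :
    ((j : ℝ) + k) * weightDefect (fun n => (w n : ℝ)) p j k
      ≤ 8 * k * (w j + j * w p / p) := by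
  set Φ := weightDefect (fun n => (w n : ℝ)) p j k
  have hsup := hw.sub_add_le hkp
  have hp : (0 : ℝ) < p := by exact_mod_cast hk.trans hkp
  have hjp : (0 : ℝ) ≤ j * w p / p := by positivity
  rcases le_or_gt Φ 0 with hΦ | hΦ
  · nlinarith [(by positivity : (0 : ℝ) ≤ w j)]
  rcases le_total k j with hkj | hjk
  · have hinc : (j : ℝ) * w (k + j) ≤ j * w j + 4 * k * w j := by
      exact_mod_cast hw.increment_le hkj
    have hΦle : Φ ≤ w (k + j) - w j := by
      simp only [Φ, weightDefect, add_comm j k]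
      linarith [(by positivity : (0 : ℝ) ≤ w k)]
    have hkjR : (k : ℝ) ≤ j := by exact_mod_cast hkj
    nlinarith
  · have hinc : (k : ℝ) * w (j + k) ≤ k * w k + 4 * j * w k := by
      exact_mod_cast hw.increment_le hjk
    have hΦle : Φ ≤ w (j + k) - w k := by
      simp only [Φ, weightDefect]
      linarith [(by positivity : (0 : ℝ) ≤ w j)]
    have hslope : (w k : ℝ) ≤ k * w p / p := by
      rw [le_div_iff₀ hp]
      exact_mod_cast (mul_comm _ _).trans_le (hw.slope_mono hkp)
    have hjkR : (j : ℝ) ≤ k := by exact_mod_cast hjk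
    have hj : (0 : ℝ) ≤ j := by positivity
    have : (j : ℝ) * (k * w p / p) = k * (j * w p / p) := by ring
    nlinarith

theorem defect_mul_le (hw : IsModerateWeight w) {a : ℕ → ℕ → ℕ → ℝ} {C Q : ℝ} {q : ℕ → ℕ → ℝ}
    (hGB : GB a C Q q) (ha : ∀ i j k, 0 ≤ a i j k) {p j k : ℕ} (hk : 1 ≤ k) (hkp : k ≤ p) :
    weightDefect (fun n => (w n : ℝ)) p j k * a p j k
      ≤ 8 * C * (k * (p - k + 1) * q p k) * (w j + j * w p / p) := by
  obtain ⟨hC, -, hq, -, hrate⟩ := hGB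
  set Φ := weightDefect (fun n => (w n : ℝ)) p j k
  have hkpR : (k : ℝ) ≤ p := by exact_mod_cast hkp
  have hRHS : 0 ≤ 8 * C * (k * (p - k + 1) * q p k) * (w j + j * w p / p) := by
    have := hq p k
    have : (0 : ℝ) ≤ p - k + 1 := by linarith
    positivity
  rcases le_or_gt Φ 0 with hΦ | hΦ
  · exact (mul_nonpos_of_nonpos_of_nonneg hΦ (ha p j k)).trans hRHS
  obtain hj | hj := Nat.eq_zero_or_pos j
  · subst hj
    exact absurd (hw.defect_zero_nonpos hkp) hΦ.not_ge
  calc Φ * a p j k ≤ Φ * (C * (p - k + 1) * (j + k) * q p k) :=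
        mul_le_mul_of_nonneg_left (hrate p j k hk hkp hj) hΦ.le
    _ = C * (p - k + 1) * q p k * ((j + k) * Φ) := by ring
    _ ≤ C * (p - k + 1) * q p k * (8 * k * (w j + j * w p / p)) := by
        have := hq p k
        have : (0 : ℝ) ≤ p - k + 1 := by linarith
        exact mul_le_mul_of_nonneg_left (hw.mul_defect_le hk hkp) (by positivity)
    _ = 8 * C * (k * (p - k + 1) * q p k) * (w j + j * w p / p) := by ring

end IsModerateWeight

section ScaleWeight

variable {N : ℕ → ℕ}

/-- Restricting to `m ≤ n` loses nothing once `N` is strictly increasing. -/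
def scaleCount (N : ℕ → ℕ) (n : ℕ) : ℕ := #{m ∈ range (n + 1) | N m ≤ n}

/-- Convex piecewise-linear weight `∑ₘ (n - N m)⁺` (see `scaleWeight_eq_sum_sub`). -/
def scaleWeight (N : ℕ → ℕ) (n : ℕ) : ℕ := ∑ i ∈ range n, scaleCount N i

theorem strictMono_of_gap (hgap : ∀ m, 4 * N m + 1 ≤ N (m + 1)) : StrictMono N :=
  strictMono_nat_of_lt_succ fun m => by have := hgap m; omega

theorem scaleCount_mono : Monotone (scaleCount N) :=
  monotone_nat_of_le_succ fun n => card_le_card fun m => by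
    simp only [mem_filter, mem_range]
    omega

theorem one_le_scaleCount (h0 : N 0 = 0) (n : ℕ) : 1 ≤ scaleCount N n :=
  card_pos.2 ⟨0, by simp [h0]⟩

theorem scaleCount_eq_card (hN : StrictMono N) {n K : ℕ} (hK : n < K) :
    scaleCount N n = #{m ∈ range K | N m ≤ n} := by
  refine congrArg card (Finset.ext fun m => ?_)
  have := hN.le_apply (x := m)
  simp only [mem_filter, mem_range]
  omega

theorem succ_le_scaleCount (hN : StrictMono N) {n L : ℕ} (h : N L ≤ n) :
    L + 1 ≤ scaleCount N n := by
  calc L + 1 = #(range (L + 1)) := (card_range _).symm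
    _ ≤ scaleCount N n := card_le_card fun m hm => by
      have := hN.le_apply (x := m)
      have := hN.monotone (Nat.lt_succ_iff.1 (mem_range.1 hm))
      simp only [mem_filter, mem_range]
      omega

/-- A lacunary scale has at most one point in `(y / 2, 2 y]`. -/
theorem scaleCount_two_mul_le (hgap : ∀ m, 4 * N m + 1 ≤ N (m + 1)) (y : ℕ) :
    scaleCount N (2 * y) ≤ scaleCount N (y / 2) + 1 := by
  have hN := strictMono_of_gap hgap
  set s := range (2 * y + 1)
  have hmid : #{m ∈ s | y / 2 < N m ∧ N m ≤ 2 * y} ≤ 1 := by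
    refine card_le_one.2 fun m₁ h₁ m₂ h₂ => ?_
    simp only [mem_filter] at h₁ h₂
    by_contra hne
    rcases Nat.lt_or_gt_of_ne hne with h | h
    · have := hN.monotone (show m₁ + 1 ≤ m₂ by omega); have := hgap m₁; omega
    · have := hN.monotone (show m₂ + 1 ≤ m₁ by omega); have := hgap m₂; omega
  calc scaleCount N (2 * y) = #{m ∈ s | N m ≤ 2 * y} := rfl
    _ ≤ #({m ∈ s | N m ≤ y / 2} ∪ {m ∈ s | y / 2 < N m ∧ N m ≤ 2 * y}) :=
        card_le_card fun m hm => by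
          simp only [mem_filter, mem_union] at hm ⊢
          exact (le_or_gt (N m) (y / 2)).imp (⟨hm.1, ·⟩) (⟨hm.1, ·, hm.2⟩)
    _ ≤ #{m ∈ s | N m ≤ y / 2} + 1 := (card_union_le _ _).trans (by omega)
    _ = scaleCount N (y / 2) + 1 := by rw [scaleCount_eq_card hN (show y / 2 < 2 * y + 1 by omega)]

theorem scaleWeight_add (a b : ℕ) :
    scaleWeight N (a + b) = scaleWeight N a + ∑ i ∈ range b, scaleCount N (a + i) :=
  sum_range_add _ _ _

theorem scaleWeight_le_mul_scaleCount (n : ℕ) : scaleWeight N n ≤ n * scaleCount N n := by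
  unfold scaleWeight
  simpa using sum_le_sum fun i hi => scaleCount_mono (N := N) (mem_range.1 hi).le

theorem mul_scaleCount_le_scaleWeight_add (a b : ℕ) :
    scaleWeight N a + b * scaleCount N a ≤ scaleWeight N (a + b) := by
  rw [scaleWeight_add]
  simpa using sum_le_sum fun i (_ : i ∈ range b) => scaleCount_mono (N := N) (a.le_add_right i)

theorem scaleWeight_add_le (a b : ℕ) :
    scaleWeight N (a + b) ≤ scaleWeight N a + b * scaleCount N (a + b) := by
  rw [scaleWeight_add]
  simpa using sum_le_sum fun i (hi : i ∈ range b) =>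
    scaleCount_mono (N := N) (show a + i ≤ a + b by have := mem_range.1 hi; omega)

theorem half_mul_scaleCount_le (n : ℕ) : (n - n / 2) * scaleCount N (n / 2) ≤ scaleWeight N n := by
  have := mul_scaleCount_le_scaleWeight_add (N := N) (n / 2) (n - n / 2)
  rw [Nat.add_sub_cancel' (Nat.div_le_self n 2)] at this
  exact (Nat.le_add_left _ _).trans this

theorem scaleWeight_eq_sum_sub (hN : StrictMono N) {n K : ℕ} (hK : n ≤ K) :
    scaleWeight N n = ∑ m ∈ range K, (n - N m) := by
  calc scaleWeight N n = ∑ i ∈ range n, ∑ m ∈ range K, if N m ≤ i then 1 else 0 :=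
        sum_congr rfl fun i hi => by
          rw [scaleCount_eq_card hN (K := K) (by have := mem_range.1 hi; omega), card_filter]
    _ = ∑ m ∈ range K, (n - N m) := by
      rw [sum_comm]
      refine sum_congr rfl fun m _ => ?_
      rw [← card_filter, ← Nat.card_Ico (N m) n]
      congr 1
      ext i
      simp only [mem_filter, mem_range, mem_Ico]
      omega
theorem isModerateWeight_scaleWeight (h0 : N 0 = 0) (hgap : ∀ m, 4 * N m + 1 ≤ N (m + 1)) :
    IsModerateWeight (scaleWeight N) where
  zero := rfl
  slope_mono {k p} hkp := by
    obtain ⟨d, rfl⟩ := Nat.exists_eq_add_of_le hkp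
    have h₁ := scaleWeight_le_mul_scaleCount (N := N) k
    have h₂ := mul_scaleCount_le_scaleWeight_add (N := N) k d
    nlinarith
  increment_le {x y} hxy := by
    have h₁ : scaleWeight N (x + y) ≤ scaleWeight N y + x * scaleCount N (2 * y) := by
      rw [add_comm x y]
      exact (scaleWeight_add_le y x).trans
        (by gcongr; exact scaleCount_mono (by omega))
    have h₂ : scaleCount N (2 * y) ≤ 2 * scaleCount N (y / 2) := by
      have := scaleCount_two_mul_le hgap y
      have := one_le_scaleCount h0 (y / 2)
      omega
    have h₃ := half_mul_scaleCount_le (N := N) y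
    have h₄ : y ≤ 2 * (y - y / 2) := by omega
    calc y * scaleWeight N (x + y) ≤ y * scaleWeight N y + x * (y * scaleCount N (2 * y)) := by
          nlinarith
      _ ≤ y * scaleWeight N y + x * (2 * (y - y / 2) * (2 * scaleCount N (y / 2))) := by
          gcongr
      _ = y * scaleWeight N y + 4 * x * ((y - y / 2) * scaleCount N (y / 2)) := by ring
      _ ≤ y * scaleWeight N y + 4 * x * scaleWeight N y := by gcongr

theorem isLittleO_scaleWeight (hN : StrictMono N) :
    (fun i : ℕ => (i : ℝ)) =o[atTop] fun i => (scaleWeight N i : ℝ) := by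
  refine Asymptotics.isLittleO_iff.2 fun c hc => ?_
  obtain ⟨L, hL⟩ := exists_nat_gt (2 / c)
  filter_upwards [eventually_gt_atTop (2 * N L)] with i hi
  have hcount := succ_le_scaleCount hN (show N L ≤ i / 2 by omega)
  have hhalf := half_mul_scaleCount_le (N := N) i
  have key : (L + 1) * i ≤ 2 * scaleWeight N i := by
    have : i ≤ 2 * (i - i / 2) := by omega
    calc (L + 1) * i ≤ scaleCount N (i / 2) * (2 * (i - i / 2)) := by gcongr
      _ = 2 * ((i - i / 2) * scaleCount N (i / 2)) := by ring
      _ ≤ 2 * scaleWeight N i := by gcongr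
  have keyR : ((L : ℝ) + 1) * i ≤ 2 * scaleWeight N i := by exact_mod_cast key
  have hcL : 2 < c * L := by rwa [div_lt_iff₀ hc, mul_comm] at hL
  simp only [Real.norm_natCast]
  nlinarith [(by positivity : (0 : ℝ) ≤ i), (by positivity : (0 : ℝ) ≤ scaleWeight N i)]

end ScaleWeight

section WeightConstruction

variable {c0 : ℕ → ℝ}

theorem summable_sub_mul (hc0 : ∀ i, 0 ≤ c0 i) (hsum : Summable fun i : ℕ => (i : ℝ) * c0 i)
    (r : ℕ) : Summable fun i => ((i - r : ℕ) : ℝ) * c0 i :=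
  hsum.of_nonneg_of_le (fun i => mul_nonneg (Nat.cast_nonneg _) (hc0 i)) fun i =>
    mul_le_mul_of_nonneg_right (by exact_mod_cast Nat.sub_le i r) (hc0 i)

theorem tendsto_tsum_sub_mul (hc0 : ∀ i, 0 ≤ c0 i) (hsum : Summable fun i : ℕ => (i : ℝ) * c0 i) :
    Tendsto (fun r => ∑' i, ((i - r : ℕ) : ℝ) * c0 i) atTop (𝓝 0) := by
  simpa using tendsto_tsum_of_dominated_convergence (g := fun _ => (0 : ℝ)) hsum
    (fun i => tendsto_const_nhds.congr' <| (eventually_ge_atTop i).mono fun r hr => by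
      simp [Nat.sub_eq_zero_of_le hr])
    (Eventually.of_forall fun r i => by
      rw [Real.norm_of_nonneg (mul_nonneg (Nat.cast_nonneg _) (hc0 i))]
      exact mul_le_mul_of_nonneg_right (by exact_mod_cast Nat.sub_le i r) (hc0 i))

theorem exists_lacunary_scale {u : ℕ → ℝ} (hu : Tendsto u atTop (𝓝 0)) :
    ∃ N : ℕ → ℕ, N 0 = 0 ∧ (∀ m, 4 * N m + 1 ≤ N (m + 1)) ∧ ∀ m, u (N (m + 1)) ≤ (1 / 2) ^ m := by
  have : ∀ b m : ℕ, ∃ n, b ≤ n ∧ u n ≤ (1 / 2) ^ m := fun b m =>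
    ((eventually_ge_atTop b).and (hu.eventually (eventually_le_nhds (by positivity)))).exists
  choose F hFb hFu using this
  exact ⟨fun m => Nat.rec 0 (fun m prev => F (4 * prev + 1) m) m, rfl,
    fun m => hFb _ m, fun m => hFu _ m⟩

theorem summable_scaleWeight_mul {N : ℕ → ℕ} (hN : StrictMono N) (hc0 : ∀ i, 0 ≤ c0 i)
    (hsum : Summable fun i : ℕ => (i : ℝ) * c0 i)
    (hNsum : Summable fun m => ∑' i, ((i - N m : ℕ) : ℝ) * c0 i) :
    Summable fun i => (scaleWeight N i : ℝ) * c0 i := by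
  refine summable_of_sum_range_le (c := ∑' m, ∑' i, ((i - N m : ℕ) : ℝ) * c0 i)
    (fun i => mul_nonneg (Nat.cast_nonneg _) (hc0 i)) fun n => ?_
  calc ∑ i ∈ range n, (scaleWeight N i : ℝ) * c0 i
      = ∑ m ∈ range n, ∑ i ∈ range n, ((i - N m : ℕ) : ℝ) * c0 i := by
        rw [sum_comm]
        refine sum_congr rfl fun i hi => ?_
        rw [scaleWeight_eq_sum_sub hN (mem_range.1 hi).le, Nat.cast_sum, sum_mul]
    _ ≤ ∑ m ∈ range n, ∑' i, ((i - N m : ℕ) : ℝ) * c0 i :=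
        sum_le_sum fun m _ => (summable_sub_mul hc0 hsum _).sum_le_tsum _
          fun i _ => mul_nonneg (Nat.cast_nonneg _) (hc0 i)
    _ ≤ ∑' m, ∑' i, ((i - N m : ℕ) : ℝ) * c0 i :=
        hNsum.sum_le_tsum _ fun m _ => tsum_nonneg fun i => mul_nonneg (Nat.cast_nonneg _) (hc0 i)

/-- A de la Vallée-Poussin type weight for the first moment of `c0`. -/
theorem exists_isModerateWeight (hc0 : ∀ i, 0 ≤ c0 i)
    (hsum : Summable fun i : ℕ => (i : ℝ) * c0 i) :
    ∃ w : ℕ → ℕ, IsModerateWeight w ∧ ((fun i : ℕ => (i : ℝ)) =o[atTop] fun i => (w i : ℝ)) ∧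
      Summable fun i => (w i : ℝ) * c0 i := by
  obtain ⟨N, h0, hgap, hsmall⟩ := exists_lacunary_scale (tendsto_tsum_sub_mul hc0 hsum)
  have hN := strictMono_of_gap hgap
  refine ⟨scaleWeight N, isModerateWeight_scaleWeight h0 hgap, isLittleO_scaleWeight hN,
    summable_scaleWeight_mul hN hc0 hsum ((summable_nat_add_iff 1).1 ?_)⟩
  exact summable_geometric_two.of_nonneg_of_le
    (fun m => tsum_nonneg fun i => mul_nonneg (Nat.cast_nonneg _) (hc0 i)) hsmall

end WeightConstruction

theorem sum_Icc_add_eq_sum_Icc (f : ℕ → ℝ) {m k N : ℕ} (h : k ≤ N) :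
    ∑ p ∈ Icc (m + k) N, f p = ∑ x ∈ Icc m (N - k), f (x + k) := by
  rw [← Nat.sub_add_cancel h, ← map_add_right_Icc, Nat.add_sub_cancel, sum_map]
  rfl

theorem sum_range_succ_eq_sum_Icc_one {f : ℕ → ℝ} (hf : f 0 = 0) (N : ℕ) :
    ∑ i ∈ range (N + 1), f i = ∑ i ∈ Icc 1 N, f i := by
  rw [range_eq_Ico, sum_eq_sum_Ico_succ_bot (Nat.succ_pos N), hf, zero_add]
  rfl

section Truncated

variable (a : ℕ → ℕ → ℕ → ℝ) (N : ℕ) (d : ℕ → ℝ)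

def collisionSum (f : ℕ → ℕ → ℕ → ℝ) : ℝ :=
  ∑ k ∈ Icc 1 N, ∑ p ∈ Icc k N, ∑ j ∈ Icc 0 (N - k), f p j k * (a p j k * d p * d j)

variable {w : ℕ → ℝ}

theorem sum_mul_QN1 (hw0 : w 0 = 0) :
    ∑ i ∈ Icc 1 N, w i * QN1 a N d i = collisionSum a N d fun p _ k => w (p - k) := by
  simp only [QN1, collisionSum, mul_sum]
  rw [sum_comm' (t' := Icc 1 N) (s' := fun k => Icc 1 (N - k)) (by
    intro i k; simp only [mem_Icc]; omega)]
  refine sum_congr rfl fun k hk => ?_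
  have hk := mem_Icc.1 hk
  rw [show Icc k N = insert k (Icc (1 + k) N) by ext; simp only [mem_Icc, mem_insert]; omega,
    sum_insert (by simp), Nat.sub_self, hw0, sum_Icc_add_eq_sum_Icc _ hk.2]
  simp only [zero_mul, sum_const_zero, zero_add, Nat.add_sub_cancel]

theorem sum_mul_QN2 (hw0 : w 0 = 0) :
    ∑ i ∈ Icc 1 N, w i * QN2 a N d i = -collisionSum a N d fun _ j _ => w j := by
  simp only [QN2, collisionSum, mul_neg, mul_sum, sum_neg_distrib, neg_inj]
  rw [sum_comm' (t' := Icc 1 N) (s' := fun k => Icc 1 (N - k)) (by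
    intro i k; simp only [mem_Icc]; omega)]
  refine sum_congr rfl fun k _ => ?_
  rw [sum_comm]
  refine sum_congr rfl fun p _ => ?_
  rw [show Icc 0 (N - k) = insert 0 (Icc 1 (N - k)) by
    ext; simp only [mem_Icc, mem_insert]; omega, sum_insert (by simp), hw0, zero_mul, zero_add]

theorem sum_mul_QN3 :
    ∑ i ∈ Icc 1 N, w i * QN3 a N d i = collisionSum a N d fun _ j k => w (j + k) := by
  simp only [QN3, collisionSum, mul_sum]
  rw [sum_comm' (t' := Icc 1 N) (s' := fun k => Icc k N) (by
    intro i k; simp only [mem_Icc]; omega)]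
  refine sum_congr rfl fun k hk => ?_
  have hk := mem_Icc.1 hk
  rw [sum_comm]
  refine sum_congr rfl fun p _ => ?_
  rw [show Icc k N = Icc (0 + k) N by rw [zero_add], sum_Icc_add_eq_sum_Icc _ hk.2]
  simp only [Nat.add_sub_cancel]

theorem sum_mul_QN4 :
    ∑ i ∈ Icc 1 N, w i * QN4 a N d i = -collisionSum a N d fun p _ _ => w p := by
  simp only [QN4, collisionSum, mul_neg, mul_sum, sum_neg_distrib, neg_inj]
  rw [sum_comm' (t' := Icc 1 N) (s' := fun k => Icc k N) (by
    intro i k; simp only [mem_Icc]; omega)]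
  exact sum_congr rfl fun k _ => sum_congr rfl fun p _ => sum_congr rfl fun j _ => by ring

theorem sum_mul_QN_eq_collisionSum (hw0 : w 0 = 0) :
    ∑ i ∈ range (N + 1), w i * (QN1 a N d i + QN2 a N d i + QN3 a N d i + QN4 a N d i)
      = collisionSum a N d (weightDefect w) := by
  rw [sum_range_succ_eq_sum_Icc_one (by simp [hw0])]
  simp only [mul_add, sum_add_distrib, sum_mul_QN1 a N d hw0, sum_mul_QN2 a N d hw0,
    sum_mul_QN3, sum_mul_QN4, collisionSum, weightDefect, sub_mul, add_mul, sum_sub_distrib]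
  ring

end Truncated

theorem IsModerateWeight.collisionSum_defect_le {w : ℕ → ℕ} (hw : IsModerateWeight w)
    {a : ℕ → ℕ → ℕ → ℝ} {C Q : ℝ} {q : ℕ → ℕ → ℝ} (hGB : GB a C Q q)
    (ha : ∀ i j k, 0 ≤ a i j k) (N : ℕ) {d : ℕ → ℝ} (hd : ∀ i, 0 ≤ d i) :
    collisionSum a N d (weightDefect fun n => (w n : ℝ))
      ≤ 16 * C * Q * (∑ i ∈ range (N + 1), (i : ℝ) * d i)
          * ∑ i ∈ range (N + 1), (w i : ℝ) * d i := by
  obtain ⟨hC, -, hq, hqsum, -⟩ := id hGB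
  set M₁ := ∑ i ∈ range (N + 1), (i : ℝ) * d i
  set G := ∑ i ∈ range (N + 1), (w i : ℝ) * d i
  set K : ℕ → ℕ → ℝ := fun p k => k * (p - k + 1) * q p k
  set B : ℕ → ℕ → ℝ := fun p j => 8 * C * (w j + j * w p / p) * (d p * d j)
  have hK : ∀ p k, k ≤ p → 0 ≤ K p k := fun p k hkp => by
    have : (k : ℝ) ≤ p := by exact_mod_cast hkp
    have := hq p k
    have : (0 : ℝ) ≤ p - k + 1 := by linarith
    positivity
  have hB : ∀ p j, 0 ≤ B p j := fun p j => by
    have := hd p; have := hd j; positivity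
  have hsum_B : ∀ p : ℕ, 1 ≤ p → (p : ℝ) * ∑ j ∈ range (N + 1), B p j
      = 8 * C * ((p * d p) * G + (w p * d p) * M₁) := fun p hp => by
    have : (p : ℝ) ≠ 0 := by positivity
    simp only [B, G, M₁, mul_sum, ← sum_add_distrib]
    exact sum_congr rfl fun j _ => by field_simp
  calc collisionSum a N d (weightDefect fun n => (w n : ℝ))
      ≤ ∑ k ∈ Icc 1 N, ∑ p ∈ Icc k N, ∑ j ∈ range (N + 1), K p k * B p j := by
        refine sum_le_sum fun k hk => sum_le_sum fun p hp => ?_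
        have hk := mem_Icc.1 hk
        have hp := mem_Icc.1 hp
        refine (sum_le_sum fun j _ => ?_).trans (sum_le_sum_of_subset_of_nonneg
          (fun j hj => by simp only [mem_Icc, mem_range] at hj ⊢; omega)
          fun j _ _ => mul_nonneg (hK p k hp.1) (hB p j))
        calc weightDefect (fun n => (w n : ℝ)) p j k * (a p j k * d p * d j)
            = weightDefect (fun n => (w n : ℝ)) p j k * a p j k * (d p * d j) := by ring
          _ ≤ 8 * C * K p k * (w j + j * w p / p) * (d p * d j) :=
            mul_le_mul_of_nonneg_right (hw.defect_mul_le hGB ha hk.1 hp.1)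
              (mul_nonneg (hd p) (hd j))
          _ = K p k * B p j := by ring
    _ = ∑ p ∈ Icc 1 N, (∑ k ∈ Icc 1 p, K p k) * ∑ j ∈ range (N + 1), B p j := by
        rw [sum_comm' (t' := Icc 1 N) (s' := fun p => Icc 1 p) (by
          intro k p; simp only [mem_Icc]; omega)]
        refine sum_congr rfl fun p _ => ?_
        rw [sum_mul]
        exact sum_congr rfl fun k _ => (mul_sum _ _ _).symm
    _ ≤ ∑ p ∈ Icc 1 N, Q * p * ∑ j ∈ range (N + 1), B p j :=
        sum_le_sum fun p hp => mul_le_mul_of_nonneg_right (hqsum p (mem_Icc.1 hp).1)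
          (sum_nonneg fun j _ => hB p j)
    _ = 16 * C * Q * M₁ * G := by
        rw [sum_congr rfl fun p hp => by rw [mul_assoc, hsum_B p (mem_Icc.1 hp).1],
          ← sum_range_succ_eq_sum_Icc_one (by simp [hw.zero]), ← mul_sum, ← mul_sum,
          sum_add_distrib, ← sum_mul, ← sum_mul]
        ring

theorem sum_range_mul_of_initial {N : ℕ} {cN : ℕ → ℝ → ℝ} {c0 : ℕ → ℝ}
    (hinit : ∀ i, i ≤ N → cN i 0 = c0 i) (v : ℕ → ℝ) :
    ∑ i ∈ range (N + 1), v i * cN i 0 = ∑ i ∈ range (N + 1), v i * c0 i :=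
  sum_congr rfl fun i hi => by rw [hinit i (Nat.lt_succ_iff.1 (mem_range.1 hi))]

theorem le_mul_exp_of_hasDerivAt {f f' : ℝ → ℝ} {K : ℝ}
    (hf : ∀ t, 0 ≤ t → HasDerivAt f (f' t) t) (hle : ∀ t, 0 ≤ t → f' t ≤ K * f t)
    {t : ℝ} (ht : 0 ≤ t) : f t ≤ f 0 * Real.exp (K * t) := by
  have := le_gronwallBound_of_liminf_deriv_right_le (δ := f 0) (ε := 0) (b := t)
    (fun s hs => (hf s hs.1).continuousAt.continuousWithinAt)
    (fun s hs r hr => (hf s hs.1).hasDerivWithinAt.liminf_right_slope_le hr) le_rfl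
    (fun s hs => by simpa using hle s hs.1) t ⟨ht, le_rfl⟩
  rwa [sub_zero, gronwallBound_ε0] at this

namespace IsTruncSolNon

variable {a : ℕ → ℕ → ℕ → ℝ} {N : ℕ} {cN : ℕ → ℝ → ℝ}

theorem hasDerivAt_sum_mul (hsol : IsTruncSolNon a N (Set.Ici 0) cN) {w : ℕ → ℝ}
    (hw0 : w 0 = 0) {s : ℝ} (hs : 0 ≤ s) :
    HasDerivAt (fun t => ∑ i ∈ range (N + 1), w i * cN i t)
      (collisionSum a N (fun n => cN n s) (weightDefect w)) s := by
  obtain ⟨-, hmid, hlast⟩ := hsol s hs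
  rw [← sum_mul_QN_eq_collisionSum a N _ hw0]
  refine HasDerivAt.fun_sum fun i hi => ?_
  obtain rfl | hi0 := Nat.eq_zero_or_pos i
  · simpa [hw0] using hasDerivAt_const s (0 : ℝ)
  refine HasDerivAt.const_mul (w i) ?_
  obtain hiN | rfl := Nat.lt_or_eq_of_le (Nat.lt_succ_iff.1 (mem_range.1 hi))
  · exact hmid i hi0 (by omega)
  · simpa [QN1, QN2] using hlast

theorem sum_mul_eq (hsol : IsTruncSolNon a N (Set.Ici 0) cN) {t : ℝ} (ht : 0 ≤ t) :
    ∑ i ∈ range (N + 1), (i : ℝ) * cN i t = ∑ i ∈ range (N + 1), (i : ℝ) * cN i 0 := by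
  have hderiv : ∀ s, 0 ≤ s → HasDerivAt (fun t => ∑ i ∈ range (N + 1), (i : ℝ) * cN i t) 0 s := by
    intro s hs
    convert hsol.hasDerivAt_sum_mul (w := fun n => (n : ℝ)) Nat.cast_zero hs using 1
    refine (sum_eq_zero fun k _ => sum_eq_zero fun p hp => sum_eq_zero fun j _ => ?_).symm
    rw [weightDefect, Nat.cast_sub (mem_Icc.1 hp).1]
    push_cast
    ring
  exact constant_of_has_deriv_right_zero
    (fun s hs => (hderiv s hs.1).continuousAt.continuousWithinAt)
    (fun s hs => (hderiv s hs.1).hasDerivWithinAt) t ⟨ht, le_rfl⟩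

theorem sum_mul_le_exp (hsol : IsTruncSolNon a N (Set.Ici 0) cN) {w : ℕ → ℕ}
    (hw : IsModerateWeight w) {C Q : ℝ} {q : ℕ → ℕ → ℝ} (hGB : GB a C Q q)
    (ha : ∀ i j k, 0 ≤ a i j k) (hnn : ∀ t, 0 ≤ t → ∀ i, 0 ≤ cN i t) {t : ℝ} (ht : 0 ≤ t) :
    ∑ i ∈ range (N + 1), (w i : ℝ) * cN i t ≤ (∑ i ∈ range (N + 1), (w i : ℝ) * cN i 0) *
      Real.exp (16 * C * Q * (∑ i ∈ range (N + 1), (i : ℝ) * cN i 0) * t) := by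
  refine le_mul_exp_of_hasDerivAt (fun s hs => hsol.hasDerivAt_sum_mul (by simp [hw.zero]) hs)
    (fun s hs => ?_) ht
  rw [← hsol.sum_mul_eq hs]
  exact hw.collisionSum_defect_le hGB ha N (hnn s hs)

variable {c0 : ℕ → ℝ}

theorem sum_mul_eq_of_initial (hsol : IsTruncSolNon a N (Set.Ici 0) cN)
    (hinit : ∀ i, i ≤ N → cN i 0 = c0 i) {t : ℝ} (ht : 0 ≤ t) :
    ∑ i ∈ range (N + 1), (i : ℝ) * cN i t = ∑ i ∈ range (N + 1), (i : ℝ) * c0 i := by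
  rw [hsol.sum_mul_eq ht, sum_range_mul_of_initial hinit]

theorem sum_mul_le_of_initial (hsol : IsTruncSolNon a N (Set.Ici 0) cN) {w : ℕ → ℕ}
    (hw : IsModerateWeight w) {C Q : ℝ} {q : ℕ → ℕ → ℝ} (hGB : GB a C Q q)
    (ha : ∀ i j k, 0 ≤ a i j k) (hnn : ∀ t, 0 ≤ t → ∀ i, 0 ≤ cN i t) (hc0 : ∀ i, 0 ≤ c0 i)
    (hinit : ∀ i, i ≤ N → cN i 0 = c0 i) (hwsum : Summable fun i => (w i : ℝ) * c0 i)
    (hmass : Summable fun i : ℕ => (i : ℝ) * c0 i) {t : ℝ} (ht : 0 ≤ t) :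
    ∑ i ∈ range (N + 1), (w i : ℝ) * cN i t
      ≤ (∑' i, (w i : ℝ) * c0 i) * Real.exp (16 * C * Q * (∑' i : ℕ, (i : ℝ) * c0 i) * t) := by
  refine (hsol.sum_mul_le_exp hw hGB ha hnn ht).trans ?_
  obtain ⟨hC, hQ, -⟩ := hGB
  rw [sum_range_mul_of_initial hinit, sum_range_mul_of_initial hinit]
  gcongr
  · exact tsum_nonneg fun i => mul_nonneg (Nat.cast_nonneg _) (hc0 i)
  · exact hwsum.sum_le_tsum _ fun i _ => mul_nonneg (Nat.cast_nonneg _) (hc0 i)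
  · exact hmass.sum_le_tsum _ fun i _ => mul_nonneg i.cast_nonneg (hc0 i)

end IsTruncSolNon

theorem hasSum_of_tendsto_of_tight {F : ℕ → ℕ → ℝ} {f S : ℕ → ℝ} {ρ : ℝ}
    (hF : ∀ m i, 0 ≤ F m i) (hlim : ∀ i, Tendsto (fun m => F m i) atTop (𝓝 (f i)))
    (hS : ∀ m, HasSum (F m) (S m)) (hρ : Tendsto S atTop (𝓝 ρ))
    (htight : ∀ ε > 0, ∃ M, ∀ m, S m ≤ ∑ i ∈ range M, F m i + ε) : HasSum f ρ := by
  have hf : ∀ i, 0 ≤ f i := fun i => ge_of_tendsto' (hlim i) (hF · i)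
  have hpart : ∀ M, Tendsto (fun m => ∑ i ∈ range M, F m i) atTop (𝓝 (∑ i ∈ range M, f i)) :=
    fun M => tendsto_finsetSum _ fun i _ => hlim i
  have upper : ∀ M, ∑ i ∈ range M, f i ≤ ρ := fun M =>
    le_of_tendsto_of_tendsto' (hpart M) hρ fun m => sum_le_hasSum _ (fun i _ => hF m i) (hS m)
  refine (hasSum_iff_tendsto_nat_of_nonneg hf ρ).2 (tendsto_order.2
    ⟨fun b hb => ?_, fun b hb => Eventually.of_forall fun M => (upper M).trans_lt hb⟩)
  obtain ⟨M, hM⟩ := htight ((ρ - b) / 2) (by linarith)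
  have lower : ρ - (ρ - b) / 2 ≤ ∑ i ∈ range M, f i :=
    le_of_tendsto_of_tendsto' (hρ.sub_const _) (hpart M) fun m => by linarith [hM m]
  filter_upwards [eventually_ge_atTop M] with M' hM'
  calc b < ρ - (ρ - b) / 2 := by linarith
    _ ≤ ∑ i ∈ range M', f i :=
      lower.trans (sum_le_sum_of_subset_of_nonneg (range_mono hM') fun i _ _ => hf i)

theorem exists_sum_mul_le_of_isLittleO {w : ℕ → ℕ}
    (hw : (fun i : ℕ => (i : ℝ)) =o[atTop] fun i => (w i : ℝ)) (B : ℝ) {ε : ℝ} (hε : 0 < ε) :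
    ∃ M, ∀ (s : Finset ℕ) (d : ℕ → ℝ), (∀ i, 0 ≤ d i) → ∑ i ∈ s, (w i : ℝ) * d i ≤ B →
      ∑ i ∈ s, (i : ℝ) * d i ≤ ∑ i ∈ range M, (i : ℝ) * d i + ε := by
  set δ := ε / (|B| + 1)
  have hδ : 0 < δ := by positivity
  have hδB : δ * B ≤ ε := by
    calc δ * B ≤ δ * (|B| + 1) := by gcongr; linarith [le_abs_self B]
      _ = ε := div_mul_cancel₀ _ (by positivity)
  obtain ⟨M, hM⟩ := eventually_atTop.1 (Asymptotics.isLittleO_iff.1 hw hδ)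
  refine ⟨M, fun s d hd hB => ?_⟩
  have hfar : ∀ i ∈ s, ¬ i < M → (i : ℝ) * d i ≤ δ * ((w i : ℝ) * d i) := fun i _ hi => by
    have := hM i (not_lt.1 hi)
    simp only [Real.norm_natCast] at this
    rw [← mul_assoc]
    exact mul_le_mul_of_nonneg_right this (hd i)
  rw [← sum_filter_add_sum_filter_not s (· < M)]
  refine add_le_add (sum_le_sum_of_subset_of_nonneg (fun i hi => mem_range.2 (mem_filter.1 hi).2)
    fun i _ _ => mul_nonneg i.cast_nonneg (hd i)) ?_
  calc ∑ i ∈ s with ¬ i < M, (i : ℝ) * d i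
      ≤ ∑ i ∈ s with ¬ i < M, δ * ((w i : ℝ) * d i) :=
        sum_le_sum fun i hi => hfar i (mem_filter.1 hi).1 (mem_filter.1 hi).2
    _ ≤ δ * ∑ i ∈ s, (w i : ℝ) * d i := by
        rw [← mul_sum]
        exact mul_le_mul_of_nonneg_left (sum_le_sum_of_subset_of_nonneg (filter_subset _ _)
          fun i _ _ => mul_nonneg (Nat.cast_nonneg _) (hd i)) hδ.le
    _ ≤ ε := (mul_le_mul_of_nonneg_left hB hδ.le).trans hδB

theorem admissible_nonisolated_mass_conservation_general
    (a : ℕ → ℕ → ℕ → ℝ) (ha : ∀ i j k, 0 ≤ a i j k)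
    (C Q : ℝ) (q : ℕ → ℕ → ℝ) (hGB : GB a C Q q)
    (c0 : ℕ → ℝ) (hc0 : ∀ i, 0 ≤ c0 i)
    (hX : Summable (fun i : ℕ => (1 + (i : ℝ)) * c0 i))
    (c : ℕ → ℝ → ℝ)
    (hadm : AdmissibleNon a c0 c) :
    ∀ t : ℝ, 0 ≤ t → (∑' i : ℕ, (i : ℝ) * c i t) = (∑' i : ℕ, (i : ℝ) * c0 i) := by
  intro t ht
  obtain ⟨Nm, cN, hNm, -, hsol, hinit, hhigh, hpos, hlim⟩ := hadm
  have hmass : Summable fun i : ℕ => (i : ℝ) * c0 i :=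
    hX.of_nonneg_of_le (fun i => mul_nonneg i.cast_nonneg (hc0 i))
      fun i => mul_le_mul_of_nonneg_right (by linarith) (hc0 i)
  obtain ⟨w, hw, hsuper, hwsum⟩ := exists_isModerateWeight hc0 hmass
  have hnn : ∀ m s, 0 ≤ s → ∀ i, 0 ≤ cN m i s := fun m s hs i =>
    (le_or_gt i (Nm m)).elim (hpos m i · s hs) fun h => (hhigh m i h s).ge
  have hmass_eq := fun m => (hsol m).sum_mul_eq_of_initial (hinit m) ht
  refine (hasSum_of_tendsto_of_tight (S := fun m => ∑ i ∈ range (Nm m + 1), (i : ℝ) * c0 i)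
    (fun m i => mul_nonneg i.cast_nonneg (hnn m t ht i)) (fun i => (hlim i t ht).const_mul _)
    (fun m => ?_) ?_ fun ε hε => ?_).tsum_eq
  · rw [← hmass_eq]
    exact hasSum_sum_of_ne_finset_zero fun i hi => by
      rw [hhigh m i (by simpa using hi) t, mul_zero]
  · exact hmass.hasSum.tendsto_sum_nat.comp ((tendsto_add_atTop_nat 1).comp hNm.tendsto_atTop)
  · obtain ⟨M, hM⟩ := exists_sum_mul_le_of_isLittleO hsuper _ hε
    exact ⟨M, fun m => (hmass_eq m).symm.trans_le (hM _ _ (hnn m t ht)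
      ((hsol m).sum_mul_le_of_initial hw hGB ha (hnn m) hc0 (hinit m) hwsum hmass ht))⟩

/-- Theorem 5.4: admissible solutions of the non-isolated DGED system conserve the
total mass. -/
theorem admissible_nonisolated_mass_conservation
    (a : ℕ → ℕ → ℕ → ℝ) (ha : ∀ i j k, 0 ≤ a i j k)
    (hzero : ∀ p : ℕ, 1 ≤ p → a p 0 p = 0)
    (C Q : ℝ) (q : ℕ → ℕ → ℝ) (hGB : GB a C Q q)
    (c0 : ℕ → ℝ) (hc0 : ∀ i, 0 ≤ c0 i)
    (hX : Summable (fun i : ℕ => (1 + (i : ℝ)) * c0 i))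
    (c : ℕ → ℝ → ℝ) (hc : MildSolNon a c0 (Set.Ici 0) c)
    (hadm : AdmissibleNon a c0 c) :
    ∀ t : ℝ, 0 ≤ t → (∑' i : ℕ, (i : ℝ) * c i t) = (∑' i : ℕ, (i : ℝ) * c0 i) :=
  admissible_nonisolated_mass_conservation_general a ha C Q q hGB c0 hc0 hX c hadm
end

section
/- Suppose the rate coefficients satisfy the extended growth condition: there exist C ≥ 1, Q ≥ 1 and nonnegative reals q_{i,k} with ∑_{k=1}^{i} k(i−k+1) q_{i,k} ≤ Q·i for every i ≥ 1, and a(i,j;k) ≤ C(i−k+1)(j+k) q_{i,k} for all 1 ≤ k ≤ i and ALL j ≥ 0 (including j = 0). Let T ∈ (0,∞] and let c = (c_i) be a mild solution of the DGED system (isolated or non-isolated) on [0,T) such that t ↦ ∑_{i=1}^∞ i c_i(t) is constant on [0,T). Then for each i ∈ ℕ the component c_i is continuously differentiable on [0,T). -/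
/-!
The growth condition gives `∑_{k ≤ m} a(m, n; k) ≤ C Q m (1 + n)`, so each of `Q_{1,i}`, …,
`Q_{4,i}` is a series bilinear in `c` whose coefficients are dominated by the weights of
`X_{0,1}`; hence the total rate `Q_i` satisfies `|Q_i x - Q_i y| ≤ K (‖x‖ + ‖y‖) ‖x - y‖` on
`X_{0,1}^+`. Conservation of `∑ i c_i` and continuity of each component make `t ↦ c(t)`
continuous in `X_{0,1}` (Scheffé's lemma applied to the first moment), so `t ↦ Q_i(c(t))` is
continuous and the mild formulation `c_i(t) = c_{0i} + ∫_0^t Q_i(c(s)) ds` can be differentiated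
by the fundamental theorem of calculus.
-/

open Finset MeasureTheory

open Filter Topology

/-- On `X_{0,1}^+` this is the norm of `X_{0,1}`; distances are `norm01 |x - y|`. -/
noncomputable def norm01 (x : ℕ → ℝ) : ℝ := ∑' m : ℕ, (1 + (m : ℝ)) * x m

def MemX01Pos (x : ℕ → ℝ) : Prop :=
  (∀ m, 0 ≤ x m) ∧ Summable fun m : ℕ => (1 + (m : ℝ)) * x m

namespace MemX01Pos

variable {x y : ℕ → ℝ}

lemma norm01_nonneg (hx : MemX01Pos x) : 0 ≤ norm01 x :=
  tsum_nonneg fun m => mul_nonneg (by positivity) (hx.1 m)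

lemma le_norm01 (hx : MemX01Pos x) (m : ℕ) : x m ≤ norm01 x :=
  calc x m ≤ (1 + (m : ℝ)) * x m := le_mul_of_one_le_left (hx.1 m) (by simp)
    _ ≤ norm01 x := hx.2.le_tsum m fun n _ => mul_nonneg (by positivity) (hx.1 n)

lemma abs_sub (hx : MemX01Pos x) (hy : MemX01Pos y) : MemX01Pos |x - y| := by
  refine ⟨fun m => abs_nonneg _, (hx.2.add hy.2).of_nonneg_of_le
    (fun m => mul_nonneg (by positivity) (abs_nonneg _)) fun m => ?_⟩
  rw [← mul_add]
  gcongr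
  exact abs_sub_le_of_nonneg_of_le (hx.1 m) (le_add_of_nonneg_right (hy.1 m)) (hy.1 m)
    (le_add_of_nonneg_left (hx.1 m))

lemma summable_moment (hx : MemX01Pos x) : Summable fun m : ℕ => (m : ℝ) * x m :=
  hx.2.of_nonneg_of_le (fun m => mul_nonneg m.cast_nonneg (hx.1 m))
    fun m => mul_le_mul_of_nonneg_right (by linarith) (hx.1 m)

end MemX01Pos

lemma norm01_le_add_norm01_abs_sub {x y : ℕ → ℝ} (hx : MemX01Pos x) (hy : MemX01Pos y) :
    norm01 x ≤ norm01 y + norm01 |x - y| := by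
  rw [norm01, norm01, norm01, ← hy.2.tsum_add (hx.abs_sub hy).2]
  refine hx.2.tsum_le_tsum (fun m => ?_) (hy.2.add (hx.abs_sub hy).2)
  rw [← mul_add]
  gcongr
  linarith [le_abs_self (x m - y m), show |x - y| m = |x m - y m| from rfl]

def HasQuadraticLipschitzBound (G : (ℕ → ℝ) → ℝ) (K : ℝ) : Prop :=
  ∀ x y, MemX01Pos x → MemX01Pos y →
    |G x - G y| ≤ K * ((norm01 x + norm01 y) * norm01 |x - y|)

namespace HasQuadraticLipschitzBound

variable {G H : (ℕ → ℝ) → ℝ} {K L : ℝ}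

lemma add (hG : HasQuadraticLipschitzBound G K) (hH : HasQuadraticLipschitzBound H L) :
    HasQuadraticLipschitzBound (fun x => G x + H x) (K + L) := fun x y hx hy =>
  calc |G x + H x - (G y + H y)| ≤ |G x - G y| + |H x - H y| := by
        rw [add_sub_add_comm]; exact abs_add_le _ _
    _ ≤ _ := by rw [add_mul]; exact add_le_add (hG x y hx hy) (hH x y hx hy)

lemma neg (hG : HasQuadraticLipschitzBound G K) :
    HasQuadraticLipschitzBound (fun x => -G x) K := fun x y hx hy => by
  rw [neg_sub_neg, abs_sub_comm]; exact hG x y hx hy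

lemma finset_sum {ι : Type*} (s : Finset ι) {G : ι → (ℕ → ℝ) → ℝ} {K : ι → ℝ}
    (hG : ∀ k ∈ s, HasQuadraticLipschitzBound (G k) (K k)) :
    HasQuadraticLipschitzBound (fun x => ∑ k ∈ s, G k x) (∑ k ∈ s, K k) := fun x y hx hy =>
  calc |∑ k ∈ s, G k x - ∑ k ∈ s, G k y| ≤ ∑ k ∈ s, |G k x - G k y| := by
        rw [← Finset.sum_sub_distrib]; exact Finset.abs_sum_le_sum_abs _ _
    _ ≤ _ := by rw [Finset.sum_mul]; exact Finset.sum_le_sum fun k hk => hG k hk x y hx hy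

lemma tendsto {α : Type*} {l : Filter α} (hG : HasQuadraticLipschitzBound G K)
    {x : α → ℕ → ℝ} {y : ℕ → ℝ} (hx : ∀ᶠ t in l, MemX01Pos (x t)) (hy : MemX01Pos y)
    (hxy : Tendsto (fun t => norm01 |x t - y|) l (𝓝 0)) :
    Tendsto (fun t => G (x t)) l (𝓝 (G y)) := by
  rw [tendsto_iff_dist_tendsto_zero]
  refine squeeze_zero' (.of_forall fun t => dist_nonneg) ?_
    (by simpa using ((tendsto_const_nhds (x := 2 * norm01 y)).add hxy).mul hxy |>.const_mul |K|)
  filter_upwards [hx] with t ht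
  have hD := (ht.abs_sub hy).norm01_nonneg
  have hxt := norm01_le_add_norm01_abs_sub ht hy
  calc dist (G (x t)) (G y) ≤ K * ((norm01 (x t) + norm01 y) * norm01 |x t - y|) := hG _ _ ht hy
    _ ≤ |K| * ((norm01 (x t) + norm01 y) * norm01 |x t - y|) := by
      gcongr
      · exact mul_nonneg (add_nonneg ht.norm01_nonneg hy.norm01_nonneg) hD
      · exact le_abs_self K
    _ ≤ |K| * ((2 * norm01 y + norm01 |x t - y|) * norm01 |x t - y|) := by
      gcongr |K| * (?_ * _)
      linarith

end HasQuadraticLipschitzBound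

def HasBilinearBound {ι : Type*} (A : ι → ℝ) (α β : ι → ℕ) (K : ℝ) : Prop :=
  ∀ u v, MemX01Pos u → MemX01Pos v →
    Summable (fun p => A p * u (α p) * v (β p)) ∧
      ∑' p, A p * u (α p) * v (β p) ≤ K * (norm01 u * norm01 v)

namespace HasBilinearBound

variable {ι : Type*} {A : ι → ℝ} {α β : ι → ℕ} {K : ℝ}

lemma hasQuadraticLipschitzBound (hB : HasBilinearBound A α β K) (hA : ∀ p, 0 ≤ A p) :
    HasQuadraticLipschitzBound (fun x => ∑' p, A p * x (α p) * x (β p)) K := by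
  intro x y hx hy
  have hd := hx.abs_sub hy
  obtain ⟨hsx, -⟩ := hB x x hx hx
  obtain ⟨hsy, -⟩ := hB y y hy hy
  obtain ⟨hs1, hb1⟩ := hB x |x - y| hx hd
  obtain ⟨hs2, hb2⟩ := hB |x - y| y hd hy
  have hpt : ∀ p, ‖A p * x (α p) * x (β p) - A p * y (α p) * y (β p)‖ ≤
      A p * x (α p) * |x - y| (β p) + A p * |x - y| (α p) * y (β p) := fun p => by
    have hsplit : A p * x (α p) * x (β p) - A p * y (α p) * y (β p) =
        A p * (x (α p) * (x (β p) - y (β p)) + (x (α p) - y (α p)) * y (β p)) := by ring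
    rw [Real.norm_eq_abs, hsplit, abs_mul, abs_of_nonneg (hA p), mul_assoc, mul_assoc, ← mul_add]
    refine mul_le_mul_of_nonneg_left ?_ (hA p)
    refine (abs_add_le _ _).trans_eq ?_
    rw [abs_mul, abs_mul, abs_of_nonneg (hx.1 _), abs_of_nonneg (hy.1 _)]
    rfl
  calc |∑' p, A p * x (α p) * x (β p) - ∑' p, A p * y (α p) * y (β p)|
      = ‖∑' p, (A p * x (α p) * x (β p) - A p * y (α p) * y (β p))‖ := by
        rw [hsx.tsum_sub hsy, Real.norm_eq_abs]
    _ ≤ ∑' p, (A p * x (α p) * |x - y| (β p) + A p * |x - y| (α p) * y (β p)) :=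
        tsum_of_norm_bounded (hs1.add hs2).hasSum hpt
    _ ≤ K * (norm01 x * norm01 |x - y|) + K * (norm01 |x - y| * norm01 y) := by
        rw [hs1.tsum_add hs2]; exact add_le_add hb1 hb2
    _ = K * ((norm01 x + norm01 y) * norm01 |x - y|) := by ring

end HasBilinearBound

lemma hasBilinearBound_id_const {A : ℕ → ℝ} {K : ℝ} (b : ℕ) (hK : 0 ≤ K)
    (hA0 : ∀ j, 0 ≤ A j) (hA : ∀ j, A j ≤ K * (1 + j)) :
    HasBilinearBound A id (fun _ => b) K := by
  intro u v hu hv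
  have hle : ∀ j : ℕ, A j * u j * v b ≤ K * v b * ((1 + (j : ℝ)) * u j) := fun j => by
    have := mul_le_mul_of_nonneg_right (hA j) (mul_nonneg (hu.1 j) (hv.1 b))
    linarith
  have hs : Summable fun j : ℕ => K * v b * ((1 + (j : ℝ)) * u j) := hu.2.mul_left _
  have hs' : Summable fun j : ℕ => A j * u j * v b :=
    hs.of_nonneg_of_le (fun j => mul_nonneg (mul_nonneg (hA0 j) (hu.1 j)) (hv.1 b)) hle
  refine ⟨hs', ?_⟩
  calc ∑' j : ℕ, A j * u j * v b ≤ ∑' j : ℕ, K * v b * ((1 + (j : ℝ)) * u j) :=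
        hs'.tsum_le_tsum hle hs
    _ = K * v b * norm01 u := tsum_mul_left
    _ ≤ K * norm01 v * norm01 u := by gcongr; exacts [hu.norm01_nonneg, hv.le_norm01 b]
    _ = K * (norm01 u * norm01 v) := by ring

lemma hasBilinearBound_snd_const {A : ℕ × ℕ → ℝ} {K : ℝ} (b : ℕ) (hK : 0 ≤ K)
    (hA0 : ∀ p, 0 ≤ A p) (hfib : ∀ j, Summable fun k => A (k, j))
    (hA : ∀ j : ℕ, ∑' k, A (k, j) ≤ K * (1 + j)) :
    HasBilinearBound A Prod.snd (fun _ => b) K := by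
  intro u v hu hv
  obtain ⟨hs, hle⟩ := hasBilinearBound_id_const b hK (fun j => tsum_nonneg fun k => hA0 (k, j))
    hA u v hu hv
  let F : ℕ × ℕ → ℝ := fun p => A (p.2, p.1) * u p.1 * v b
  have hF0 : ∀ p, 0 ≤ F p := fun p => mul_nonneg (mul_nonneg (hA0 _) (hu.1 _)) (hv.1 b)
  have hfibF : ∀ j, Summable fun k => F (j, k) := fun j =>
    ((hfib j).mul_right (u j)).mul_right (v b)
  have hsumF : ∀ j, ∑' k, F (j, k) = (∑' k, A (k, j)) * u j * v b := fun j => by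
    simp only [F, tsum_mul_right]
  have hF : Summable F :=
    (summable_prod_of_nonneg hF0).2 ⟨hfibF, by simpa only [hsumF, id] using hs⟩
  refine ⟨hF.prod_symm, ?_⟩
  calc ∑' p : ℕ × ℕ, A p * u p.2 * v b = ∑' p, F p := (Equiv.prodComm ℕ ℕ).tsum_eq F
    _ = ∑' j, (∑' k, A (k, j)) * u j * v b := by rw [hF.tsum_prod' hfibF]; exact tsum_congr hsumF
    _ ≤ K * (norm01 u * norm01 v) := hle

lemma hasBilinearBound_comp_fst_snd {A : ℕ × ℕ → ℝ} {K : ℝ} {φ : ℕ → ℕ} (hφ : Function.Injective φ)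
    (hK : 0 ≤ K) (hA0 : ∀ p, 0 ≤ A p) (hA : ∀ p, A p ≤ K * ((1 + (φ p.1 : ℝ)) * (1 + p.2))) :
    HasBilinearBound A (fun p => φ p.1) Prod.snd K := by
  intro u v hu hv
  set f : ℕ → ℝ := fun k => (1 + (φ k : ℝ)) * u (φ k)
  set g : ℕ → ℝ := fun j => (1 + (j : ℝ)) * v j
  have hf0 : ∀ k, 0 ≤ f k := fun k => mul_nonneg (by positivity) (hu.1 _)
  have hg0 : ∀ j, 0 ≤ g j := fun j => mul_nonneg (by positivity) (hv.1 _)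
  have hf : Summable f := hu.2.comp_injective hφ
  have hfg : Summable fun p : ℕ × ℕ => f p.1 * g p.2 := hf.mul_of_nonneg hv.2 hf0 hg0
  have hle : ∀ p : ℕ × ℕ, A p * u (φ p.1) * v p.2 ≤ K * (f p.1 * g p.2) := fun p => by
    have := mul_le_mul_of_nonneg_right (hA p) (mul_nonneg (hu.1 (φ p.1)) (hv.1 p.2))
    simp only [f, g]
    linarith
  have hs : Summable fun p : ℕ × ℕ => A p * u (φ p.1) * v p.2 :=
    (hfg.mul_left K).of_nonneg_of_le
      (fun p => mul_nonneg (mul_nonneg (hA0 p) (hu.1 _)) (hv.1 _)) hle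
  refine ⟨hs, ?_⟩
  calc ∑' p, A p * u (φ p.1) * v p.2 ≤ ∑' p : ℕ × ℕ, K * (f p.1 * g p.2) :=
        hs.tsum_le_tsum hle (hfg.mul_left K)
    _ = K * ((∑' k, f k) * norm01 v) := by rw [tsum_mul_left, ← hf.tsum_mul_tsum hv.2 hfg]; rfl
    _ ≤ K * (norm01 u * norm01 v) := by
        gcongr
        · exact hv.norm01_nonneg
        · exact tsum_comp_le_tsum_of_inj hu.2 (fun m => mul_nonneg (by positivity) (hu.1 m)) hφ

section Rates

variable {a : ℕ → ℕ → ℕ → ℝ} {K : ℝ}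

lemma sum_rate_le_of_growth {C Q : ℝ} {q : ℕ → ℕ → ℝ} (hC : 0 ≤ C) (hq : ∀ i k, 0 ≤ q i k)
    (hqsum : ∀ i : ℕ, 1 ≤ i →
      ∑ k ∈ Icc 1 i, (k : ℝ) * ((i : ℝ) - k + 1) * q i k ≤ Q * i)
    (hbound : ∀ i j k : ℕ, 1 ≤ k → k ≤ i →
      a i j k ≤ C * ((i : ℝ) - k + 1) * ((j : ℝ) + k) * q i k)
    (m n : ℕ) : ∑ k ∈ Icc 1 m, a m n k ≤ C * Q * m * (1 + n) := by
  rcases Nat.eq_zero_or_pos m with rfl | hm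
  · simp
  have hterm : ∀ k ∈ Icc 1 m, a m n k ≤ C * (1 + n) * ((k : ℝ) * ((m : ℝ) - k + 1) * q m k) := by
    intro k hk
    obtain ⟨hk1, hkm⟩ := mem_Icc.1 hk
    have hk1' : (1 : ℝ) ≤ k := by exact_mod_cast hk1
    have hkm' : (k : ℝ) ≤ m := by exact_mod_cast hkm
    calc a m n k ≤ C * ((m : ℝ) - k + 1) * ((n : ℝ) + k) * q m k := hbound m n k hk1 hkm
      _ ≤ C * ((m : ℝ) - k + 1) * ((1 + n) * k) * q m k := by
          have : 0 ≤ C * ((m : ℝ) - k + 1) := mul_nonneg hC (by linarith)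
          gcongr
          · exact hq m k
          · nlinarith [(n.cast_nonneg : (0 : ℝ) ≤ n)]
      _ = _ := by ring
  calc ∑ k ∈ Icc 1 m, a m n k
      ≤ ∑ k ∈ Icc 1 m, C * (1 + n) * ((k : ℝ) * ((m : ℝ) - k + 1) * q m k) := sum_le_sum hterm
    _ = C * (1 + n) * ∑ k ∈ Icc 1 m, (k : ℝ) * ((m : ℝ) - k + 1) * q m k := (mul_sum ..).symm
    _ ≤ C * (1 + n) * (Q * m) := by gcongr; exact hqsum m hm
    _ = C * Q * m * (1 + n) := by ring

lemma rate_le_of_sum_rate_le (ha : ∀ i j k, 0 ≤ a i j k)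
    (hrate : ∀ m n : ℕ, ∑ k ∈ Icc 1 m, a m n k ≤ K * m * (1 + n))
    {m n k : ℕ} (hk1 : 1 ≤ k) (hkm : k ≤ m) : a m n k ≤ K * m * (1 + n) :=
  (single_le_sum (fun k _ => ha m n k) (mem_Icc.2 ⟨hk1, hkm⟩)).trans (hrate m n)

lemma hasQuadraticLipschitzBound_Qi1 (ha : ∀ i j k, 0 ≤ a i j k) (hK : 0 ≤ K)
    (hrate : ∀ m n : ℕ, ∑ k ∈ Icc 1 m, a m n k ≤ K * m * (1 + n)) (i : ℕ) :
    HasQuadraticLipschitzBound (fun x => Qi1 a x i) K := by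
  set A : ℕ × ℕ → ℝ := fun p => if 1 ≤ p.1 then a (i + p.1) p.2 p.1 else 0
  have hQ : (fun x => Qi1 a x i) = fun x => ∑' p : ℕ × ℕ, A p * x (i + p.1) * x p.2 := by
    simp only [Qi1, A, ite_mul, zero_mul]
  have hA0 : ∀ p, 0 ≤ A p := fun p => by
    simp only [A]; split_ifs
    exacts [ha _ _ _, le_rfl]
  rw [hQ]
  refine (hasBilinearBound_comp_fst_snd (φ := (i + ·)) (add_right_injective i) hK hA0
    fun ⟨k, j⟩ => ?_).hasQuadraticLipschitzBound hA0
  simp only [A]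
  split_ifs with hk
  · calc a (i + k) j k ≤ K * (i + k : ℕ) * (1 + j) :=
          rate_le_of_sum_rate_le ha hrate hk (Nat.le_add_left k i)
      _ ≤ K * ((1 + (i + k : ℕ)) * (1 + j)) := by rw [mul_assoc]; gcongr; linarith
  · positivity

lemma hasQuadraticLipschitzBound_Qi2 (ha : ∀ i j k, 0 ≤ a i j k) (hK : 0 ≤ K)
    (hrate : ∀ m n : ℕ, ∑ k ∈ Icc 1 m, a m n k ≤ K * m * (1 + n)) (i : ℕ) :
    HasQuadraticLipschitzBound (fun x => Qi2 a x i) (K * (1 + i)) := by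
  set A : ℕ × ℕ → ℝ := fun p => if 1 ≤ p.1 ∧ p.1 ≤ p.2 then a p.2 i p.1 else 0
  have hQ : (fun x => Qi2 a x i) = fun x => -∑' p : ℕ × ℕ, A p * x p.2 * x i := by
    simp only [Qi2, A, ite_mul, zero_mul]
  have hA0 : ∀ p, 0 ≤ A p := fun p => by
    simp only [A]; split_ifs
    exacts [ha _ _ _, le_rfl]
  have hsupp : ∀ j, ∀ k ∉ Icc 1 j, A (k, j) = 0 := fun j k hk => if_neg (by simpa using hk)
  have hfib : ∀ j : ℕ, ∑' k, A (k, j) = ∑ k ∈ Icc 1 j, a j i k := fun j => by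
    rw [tsum_eq_sum (hsupp j)]
    exact sum_congr rfl fun k hk => if_pos (mem_Icc.1 hk)
  rw [hQ]
  -- Only `∑ₖ a(j, i; k)`, not each term, is `O(1 + j)`, so the kernel is bounded fiberwise.
  refine ((hasBilinearBound_snd_const i (by positivity) hA0
    (fun j => summable_of_ne_finset_zero (hsupp j)) fun j => ?_).hasQuadraticLipschitzBound
    hA0).neg
  rw [hfib]
  calc ∑ k ∈ Icc 1 j, a j i k ≤ K * j * (1 + i) := hrate j i
    _ ≤ K * (1 + i) * (1 + j) := by rw [mul_right_comm]; gcongr; linarith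

lemma hasQuadraticLipschitzBound_Qi3 (ha : ∀ i j k, 0 ≤ a i j k) (hK : 0 ≤ K)
    (hrate : ∀ m n : ℕ, ∑ k ∈ Icc 1 m, a m n k ≤ K * m * (1 + n)) (i : ℕ) :
    HasQuadraticLipschitzBound (fun x => Qi3 a x i) (∑ _k ∈ Icc 1 i, K * (1 + i)) := by
  have hQ : (fun x => Qi3 a x i) = fun x => ∑ k ∈ Icc 1 i,
      ∑' j, (if k ≤ j then a j (i - k) k else 0) * x j * x (i - k) := by
    simp only [Qi3, ite_mul, zero_mul]
  rw [hQ]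
  refine HasQuadraticLipschitzBound.finset_sum _ fun k hk => ?_
  have hk1 : 1 ≤ k := (mem_Icc.1 hk).1
  have hA0 : ∀ j, 0 ≤ if k ≤ j then a j (i - k) k else 0 := fun j => by
    split_ifs
    exacts [ha _ _ _, le_rfl]
  refine (hasBilinearBound_id_const (i - k) (by positivity) hA0
    fun j => ?_).hasQuadraticLipschitzBound hA0
  split_ifs with hkj
  · have hik : ((i - k : ℕ) : ℝ) ≤ i := by exact_mod_cast Nat.sub_le i k
    calc a j (i - k) k ≤ K * j * (1 + (i - k : ℕ)) := rate_le_of_sum_rate_le ha hrate hk1 hkj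
      _ ≤ K * (1 + j) * (1 + i) := by gcongr; linarith
      _ = K * (1 + i) * (1 + j) := by ring
  · positivity

lemma hasQuadraticLipschitzBound_Qi4 (ha : ∀ i j k, 0 ≤ a i j k) (hK : 0 ≤ K)
    (hrate : ∀ m n : ℕ, ∑ k ∈ Icc 1 m, a m n k ≤ K * m * (1 + n)) (i : ℕ) :
    HasQuadraticLipschitzBound (fun x => Qi4 a x i) (∑ _k ∈ Icc 1 i, K * i) := by
  refine (HasQuadraticLipschitzBound.finset_sum _ fun k hk => ?_).neg
  obtain ⟨hk1, hki⟩ := mem_Icc.1 hk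
  exact (hasBilinearBound_id_const i (by positivity) (ha i · k)
    fun j => rate_le_of_sum_rate_le ha hrate hk1 hki).hasQuadraticLipschitzBound (ha i · k)

noncomputable def totalRate (a : ℕ → ℕ → ℕ → ℝ) (x : ℕ → ℝ) (i : ℕ) : ℝ :=
  Qi1 a x i + Qi2 a x i + Qi3 a x i + Qi4 a x i

lemma exists_hasQuadraticLipschitzBound_totalRate (ha : ∀ i j k, 0 ≤ a i j k) (hK : 0 ≤ K)
    (hrate : ∀ m n : ℕ, ∑ k ∈ Icc 1 m, a m n k ≤ K * m * (1 + n)) (i : ℕ) :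
    ∃ L, HasQuadraticLipschitzBound (fun x => totalRate a x i) L :=
  ⟨_, (((hasQuadraticLipschitzBound_Qi1 ha hK hrate i).add
    (hasQuadraticLipschitzBound_Qi2 ha hK hrate i)).add
    (hasQuadraticLipschitzBound_Qi3 ha hK hrate i)).add
    (hasQuadraticLipschitzBound_Qi4 ha hK hrate i)⟩

end Rates

lemma tendsto_tsum_abs_sub_of_tsum_eq {α ι : Type*} {l : Filter α} {f : α → ι → ℝ} {g : ι → ℝ}
    (hf : ∀ᶠ t in l, (∀ m, 0 ≤ f t m) ∧ Summable (f t) ∧ ∑' m, f t m = ∑' m, g m)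
    (hg0 : ∀ m, 0 ≤ g m) (hg : Summable g) (hlim : ∀ m, Tendsto (fun t => f t m) l (𝓝 (g m))) :
    Tendsto (fun t => ∑' m, |f t m - g m|) l (𝓝 0) := by
  -- Scheffé: `min (f t) g` is dominated by `g`, and `|f t - g| = f t + g - 2 min (f t) g`.
  have hmin : Tendsto (fun t => ∑' m, min (f t m) (g m)) l (𝓝 (∑' m, g m)) := by
    refine tendsto_tsum_of_dominated_convergence hg
      (fun m => by simpa using (hlim m).min (tendsto_const_nhds (x := g m))) ?_
    filter_upwards [hf] with t ht m
    rw [Real.norm_eq_abs, abs_of_nonneg (le_min (ht.1 m) (hg0 m))]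
    exact min_le_right _ _
  have heq : ∀ᶠ t in l,
      2 * ∑' m, g m - 2 * ∑' m, min (f t m) (g m) = ∑' m, |f t m - g m| := by
    filter_upwards [hf] with t ⟨hf0, hfs, hsum⟩
    have hmins : Summable fun m => min (f t m) (g m) :=
      hg.of_nonneg_of_le (fun m => le_min (hf0 m) (hg0 m)) fun m => min_le_right _ _
    have hpt : ∀ m, |f t m - g m| = f t m + g m - 2 * min (f t m) (g m) := fun m => by
      linarith [max_sub_min_eq_abs' (f t m) (g m), min_add_max (f t m) (g m)]
    rw [tsum_congr hpt, (hfs.add hg).tsum_sub (hmins.mul_left 2), hfs.tsum_add hg, tsum_mul_left,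
      hsum]
    ring
  simpa using (tendsto_const_nhds.sub (hmin.const_mul 2)).congr' heq

lemma tendsto_norm01_abs_sub_of_moment_eq {α : Type*} {l : Filter α} {x : α → ℕ → ℝ}
    {y : ℕ → ℝ}
    (hx : ∀ᶠ t in l, MemX01Pos (x t) ∧ ∑' m : ℕ, (m : ℝ) * x t m = ∑' m : ℕ, (m : ℝ) * y m)
    (hy : MemX01Pos y) (hlim : ∀ m, Tendsto (fun t => x t m) l (𝓝 (y m))) :
    Tendsto (fun t => norm01 |x t - y|) l (𝓝 0) := by
  have hE : Tendsto (fun t => ∑' m : ℕ, |(m : ℝ) * x t m - m * y m|) l (𝓝 0) := by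
    refine tendsto_tsum_abs_sub_of_tsum_eq ?_ (fun m => mul_nonneg m.cast_nonneg (hy.1 m))
      hy.summable_moment fun m => (hlim m).const_mul _
    filter_upwards [hx] with t ⟨hxt, hmass⟩
    exact ⟨fun m => mul_nonneg m.cast_nonneg (hxt.1 m), hxt.summable_moment, hmass⟩
  have h0 : Tendsto (fun t => |x t 0 - y 0|) l (𝓝 0) := by
    simpa using ((hlim 0).sub_const (y 0)).abs
  refine squeeze_zero' (.of_forall fun t => ?_) ?_ (by simpa using h0.add (hE.const_mul 2))
  · exact tsum_nonneg fun m => mul_nonneg (by positivity) (abs_nonneg _)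
  · filter_upwards [hx] with t ht
    have hxt := ht.1
    have hE : Summable fun m : ℕ => |(m : ℝ) * x t m - m * y m| :=
      (hxt.summable_moment.sub hy.summable_moment).abs
    have h0 : Summable fun m : ℕ => if m = 0 then |x t 0 - y 0| else 0 :=
      summable_of_ne_finset_zero (s := {0}) (by simp_all)
    -- `1 + m ≤ 2 m` except at `m = 0`, where the first moment sees nothing.
    have hpt : ∀ m : ℕ, (1 + (m : ℝ)) * |x t - y| m ≤
        (if m = 0 then |x t 0 - y 0| else 0) + 2 * |(m : ℝ) * x t m - m * y m| := fun m => by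
      rw [Pi.abs_apply, Pi.sub_apply, ← mul_sub, abs_mul, Nat.abs_cast]
      rcases m with _ | m
      · simp
      · rw [if_neg m.succ_ne_zero, zero_add]
        push_cast
        nlinarith [abs_nonneg (x t (m + 1) - y (m + 1)), (m.cast_nonneg : (0 : ℝ) ≤ m)]
    calc norm01 |x t - y|
        ≤ ∑' m : ℕ, ((if m = 0 then |x t 0 - y 0| else 0) + 2 * |(m : ℝ) * x t m - m * y m|) :=
          (hxt.abs_sub hy).2.tsum_le_tsum hpt (h0.add (hE.mul_left 2))
      _ = |x t 0 - y 0| + 2 * ∑' m : ℕ, |(m : ℝ) * x t m - m * y m| := by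
          rw [h0.tsum_add (hE.mul_left 2), tsum_ite_eq, tsum_mul_left]

lemma HasQuadraticLipschitzBound.continuousOn_of_moment_eq {G : (ℕ → ℝ) → ℝ} {K : ℝ}
    (hG : HasQuadraticLipschitzBound G K) {α : Type*} [TopologicalSpace α] {S : Set α}
    {c : ℕ → α → ℝ} {M : ℝ} (hX : ∀ t ∈ S, MemX01Pos fun n => c n t)
    (hcont : ∀ n, ContinuousOn (c n) S) (hmass : ∀ t ∈ S, ∑' n : ℕ, (n : ℝ) * c n t = M) :
    ContinuousOn (fun t => G fun n => c n t) S := by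
  intro t₀ ht₀
  refine hG.tendsto (eventually_nhdsWithin_of_forall hX) (hX t₀ ht₀)
    (tendsto_norm01_abs_sub_of_moment_eq ?_ (hX t₀ ht₀) fun n => hcont n t₀ ht₀)
  filter_upwards [self_mem_nhdsWithin] with t ht
  exact ⟨hX t ht, (hmass t ht).trans (hmass t₀ ht₀).symm⟩

lemma hasDerivWithinAt_of_eq_integral {S : Set ℝ}
    (hS : S = Set.Ici 0 ∨ ∃ T : ℝ, 0 < T ∧ S = Set.Ico 0 T)
    {g φ : ℝ → ℝ} {A t : ℝ} (hg : ContinuousOn g S)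
    (hφ : ∀ u ∈ S, φ u = A + ∫ s in (0 : ℝ)..u, g s) (ht : t ∈ S) :
    HasDerivWithinAt φ (g t) S t := by
  obtain ⟨b, htb, hbS, hS0⟩ : ∃ b, t < b ∧ Set.Icc 0 b ⊆ S ∧ S ⊆ Set.Ici 0 := by
    rcases hS with rfl | ⟨T, -, rfl⟩
    · exact ⟨t + 1, by linarith, fun u hu => hu.1, subset_rfl⟩
    · exact ⟨(t + T) / 2, by linarith [ht.2], fun u hu => ⟨hu.1, by linarith [hu.2, ht.2]⟩,
        Set.Ico_subset_Ici_self⟩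
  have htb' : t ∈ Set.Icc 0 b := ⟨hS0 ht, htb.le⟩
  have : Fact (t ∈ Set.Icc 0 b) := ⟨htb'⟩
  have hgb := hg.mono hbS
  have hIcc : HasDerivWithinAt (fun u => ∫ s in (0 : ℝ)..u, g s) (g t) (Set.Icc 0 b) t :=
    intervalIntegral.integral_hasDerivWithinAt_right
      (hgb.mono (Set.uIcc_subset_Icc ⟨le_rfl, htb'.1.trans htb'.2⟩ htb')).intervalIntegrable
      (hgb.stronglyMeasurableAtFilter_nhdsWithin measurableSet_Icc t) (hgb t htb')
  have hnhds : Set.Icc 0 b ∈ 𝓝[S] t :=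
    mem_nhdsWithin.2 ⟨Set.Iio b, isOpen_Iio, htb, fun u hu => ⟨hS0 hu.2, le_of_lt hu.1⟩⟩
  exact ((hIcc.mono_of_mem_nhdsWithin hnhds).const_add A).congr_of_mem hφ ht

theorem mild_solution_regularity_general
    (a : ℕ → ℕ → ℕ → ℝ) (ha : ∀ i j k, 0 ≤ a i j k)
    (C Q : ℝ) (q : ℕ → ℕ → ℝ)
    (hC : 1 ≤ C) (hQ : 1 ≤ Q) (hq : ∀ i k, 0 ≤ q i k)
    (hqsum : ∀ i : ℕ, 1 ≤ i →
      ∑ k ∈ Finset.Icc 1 i, (k : ℝ) * ((i : ℝ) - k + 1) * q i k ≤ Q * i)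
    (hbound : ∀ i j k : ℕ, 1 ≤ k → k ≤ i →
      a i j k ≤ C * ((i : ℝ) - k + 1) * ((j : ℝ) + k) * q i k)
    (S : Set ℝ) (hS : S = Set.Ici 0 ∨ ∃ T : ℝ, 0 < T ∧ S = Set.Ico 0 T)
    (c0 : ℕ → ℝ) (c : ℕ → ℝ → ℝ)
    (hsol : MildSolIso a c0 S c ∨ MildSolNon a c0 S c)
    (hmass : ∀ t ∈ S, (∑' i : ℕ, (i : ℝ) * c i t) = ∑' i : ℕ, (i : ℝ) * c0 i) :
    ∀ i : ℕ, ∃ f : ℝ → ℝ, ContinuousOn f S ∧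
      ∀ t ∈ S, HasDerivWithinAt (c i) (f t) S t := by
  intro i
  have hX : ∀ t ∈ S, MemX01Pos fun n => c n t := by
    rcases hsol with h | h <;> exact fun t ht => h.2.1 t ht
  have hcont : ∀ n, ContinuousOn (c n) S := by
    rcases hsol with h | h <;> exact h.2.2.1
  obtain ⟨L, hL⟩ := exists_hasQuadraticLipschitzBound_totalRate ha
    (mul_nonneg (zero_le_one.trans hC) (zero_le_one.trans hQ))
    (sum_rate_le_of_growth (zero_le_one.trans hC) hq hqsum hbound) i
  have hrate : ContinuousOn (fun t => totalRate a (fun n => c n t) i) S :=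
    hL.continuousOn_of_moment_eq hX hcont hmass
  rcases hsol with h | h
  · exact ⟨_, hrate, fun t => hasDerivWithinAt_of_eq_integral hS hrate fun u hu =>
      (h.2.2.2 i u hu).2.2.2.2.2⟩
  rcases Nat.eq_zero_or_pos i with rfl | hi
  · exact ⟨0, continuousOn_const, fun t ht =>
      (hasDerivWithinAt_const t S (c0 0)).congr_of_mem h.2.2.2.1 ht⟩
  · exact ⟨_, hrate, fun t => hasDerivWithinAt_of_eq_integral hS hrate fun u hu =>
      (h.2.2.2.2 i hi u hu).2.2.2.2.2⟩

/-- Theorem 6.1: regularity of mild solutions under the extended growth condition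
(valid for all `j ≥ 0`, including `j = 0`), assuming conservation of the total mass.
Each component is continuously differentiable on the time interval. -/
theorem mild_solution_regularity
    (a : ℕ → ℕ → ℕ → ℝ) (ha : ∀ i j k, 0 ≤ a i j k)
    (hzero : ∀ p : ℕ, 1 ≤ p → a p 0 p = 0)
    (C Q : ℝ) (q : ℕ → ℕ → ℝ)
    (hC : 1 ≤ C) (hQ : 1 ≤ Q) (hq : ∀ i k, 0 ≤ q i k)
    (hqsum : ∀ i : ℕ, 1 ≤ i →
      ∑ k ∈ Finset.Icc 1 i, (k : ℝ) * ((i : ℝ) - k + 1) * q i k ≤ Q * i)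
    (hbound : ∀ i j k : ℕ, 1 ≤ k → k ≤ i →
      a i j k ≤ C * ((i : ℝ) - k + 1) * ((j : ℝ) + k) * q i k)
    (S : Set ℝ) (hS : S = Set.Ici 0 ∨ ∃ T : ℝ, 0 < T ∧ S = Set.Ico 0 T)
    (c0 : ℕ → ℝ) (c : ℕ → ℝ → ℝ)
    (hsol : MildSolIso a c0 S c ∨ MildSolNon a c0 S c)
    (hmass : ∀ t ∈ S, (∑' i : ℕ, (i : ℝ) * c i t) = ∑' i : ℕ, (i : ℝ) * c0 i) :
    ∀ i : ℕ, ∃ f : ℝ → ℝ, ContinuousOn f S ∧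
      ∀ t ∈ S, HasDerivWithinAt (c i) (f t) S t :=
  mild_solution_regularity_general a ha C Q q hC hQ hq hqsum hbound S hS c0 c hsol hmass
end
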